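/- Linear state-space (dynamic linear model) structure yields adjusted orthogonality: let X, Z, ω be random vectors and let Y be the random vector defined componentwise by Y_i = Σ_j G_{ij}·X_j + ω_i for a real matrix G. If Cov(ω, X) = 0 and Cov(ω, Z) = 0, then Cov_X(Y, Z) = 0, i.e. Y and Z are adjusted orthogonal given X. -/

import Mathlib

open MeasureTheory Matrix

variable {Ω : Type*}

/-- The covariance matrix of two random vectors `B` (dimension `m`) and `D` (dimension `n`):
the `(i,j)` entry is `E[Bᵢ·Dⱼ] − E[Bᵢ]·E[Dⱼ]`. -/
noncomputable def cov [MeasurableSpace Ω] (μ : Measure Ω) {m n : ℕ}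
    (B : Fin m → Ω → ℝ) (D : Fin n → Ω → ℝ) : Matrix (Fin m) (Fin n) ℝ :=
  Matrix.of fun i j =>
    (∫ ω, B i ω * D j ω ∂μ) - (∫ ω, B i ω ∂μ) * (∫ ω, D j ω ∂μ)

/-- `W` is a Moore–Penrose inverse of `V`. -/
def IsMoorePenrose {m n : ℕ} (V : Matrix (Fin m) (Fin n) ℝ)
    (W : Matrix (Fin n) (Fin m) ℝ) : Prop :=
  V * W * V = V ∧ W * V * W = W ∧ (V * W)ᵀ = V * W ∧ (W * V)ᵀ = W * V

/-- The adjusted expectation `E_D(B)` (computed with the matrix `W`, intended to be the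
Moore–Penrose inverse of `Var(D)`): the `i`-th component is
`E[Bᵢ] + Σ_j (Cov(B,D)·W)_{ij}·(Dⱼ − E[Dⱼ])`. -/
noncomputable def adjExp [MeasurableSpace Ω] (μ : Measure Ω) {m n : ℕ}
    (B : Fin m → Ω → ℝ) (D : Fin n → Ω → ℝ)
    (W : Matrix (Fin n) (Fin n) ℝ) : Fin m → Ω → ℝ :=
  fun i ω => (∫ ω', B i ω' ∂μ) + ∑ j, (cov μ B D * W) i j * (D j ω - ∫ ω', D j ω' ∂μ)

/-- The adjusted covariance `Cov_D(B,C) = Cov(B − E_D(B), C − E_D(C))`. -/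
noncomputable def adjCov [MeasurableSpace Ω] (μ : Measure Ω) {m p n : ℕ}
    (B : Fin m → Ω → ℝ) (C : Fin p → Ω → ℝ) (D : Fin n → Ω → ℝ)
    (W : Matrix (Fin n) (Fin n) ℝ) : Matrix (Fin m) (Fin p) ℝ :=
  cov μ (fun i ω => B i ω - adjExp μ B D W i ω) (fun j ω => C j ω - adjExp μ C D W j ω)


/-!
Writing `V = Var(X)`, the structural equation and `Cov(ε, X) = Cov(ε, Z) = 0` give, by
bilinearity, `Cov(Y, X) = G V` and `Cov(Y, Z) = G Cov(X, Z)`. The residual `R = Y - Cov(Y, X) W X`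
therefore has `Cov(R, X) = G (V - V W V) = 0` and `Cov(R, Z) = G (Cov(X, Z) - V W Cov(X, Z))`.
The latter vanishes because `Cov(X, Z)` has its columns in the column space of `V`: if `A V = 0`
then every component of `A X` has variance `A V Aᵀ = 0`, so is a.s. constant and uncorrelated
with `Z`. As shifting by constants does not change covariances,
`Cov_X(Y, Z) = Cov(R, Z - Cov(Z, X) W X) = 0`.
-/

open ProbabilityTheory

section

variable [MeasurableSpace Ω] {μ : Measure Ω}

lemma covariance_eq_zero_of_variance_eq_zero [IsFiniteMeasure μ] {X : Ω → ℝ}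
    (hX : MemLp X 2 μ) (h : Var[X; μ] = 0) (Y : Ω → ℝ) : cov[X, Y; μ] = 0 := by
  refine integral_eq_zero_of_ae ?_
  filter_upwards [ae_eq_integral_of_variance_eq_zero hX h] with ω hω
  simp [hω]

variable {m n p : ℕ}

def linComb (A : Matrix (Fin m) (Fin n) ℝ) (B : Fin n → Ω → ℝ) : Fin m → Ω → ℝ :=
  fun i => ∑ j, A i j • B j

lemma memLp_linComb (A : Matrix (Fin m) (Fin n) ℝ) {B : Fin n → Ω → ℝ}
    (hB : ∀ j, MemLp (B j) 2 μ) (i : Fin m) : MemLp (linComb A B i) 2 μ :=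
  memLp_finsetSum' Finset.univ fun j _ => (hB j).const_smul (A i j)

lemma cov_transpose (μ : Measure Ω) (B : Fin m → Ω → ℝ) (D : Fin n → Ω → ℝ) :
    (cov μ B D)ᵀ = cov μ D B := by
  ext i j
  simp [cov, mul_comm]

variable [IsProbabilityMeasure μ] {B B' : Fin m → Ω → ℝ} {D : Fin n → Ω → ℝ}

lemma cov_eq_covariance (hB : ∀ i, MemLp (B i) 2 μ) (hD : ∀ j, MemLp (D j) 2 μ) :
    cov μ B D = Matrix.of fun i j => cov[B i, D j; μ] := by
  ext i j
  simp [cov, covariance_eq_sub (hB i) (hD j)]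

lemma cov_sub_left (hB : ∀ i, MemLp (B i) 2 μ) (hB' : ∀ i, MemLp (B' i) 2 μ)
    (hD : ∀ j, MemLp (D j) 2 μ) : cov μ (B - B') D = cov μ B D - cov μ B' D := by
  rw [cov_eq_covariance (B := B - B') (fun i => (hB i).sub (hB' i)) hD, cov_eq_covariance hB hD,
    cov_eq_covariance hB' hD]
  ext i j
  simp [covariance_sub_left (hB i) (hB' i) (hD j)]

lemma cov_add_left (hB : ∀ i, MemLp (B i) 2 μ) (hB' : ∀ i, MemLp (B' i) 2 μ)
    (hD : ∀ j, MemLp (D j) 2 μ) : cov μ (B + B') D = cov μ B D + cov μ B' D := by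
  rw [cov_eq_covariance (B := B + B') (fun i => (hB i).add (hB' i)) hD, cov_eq_covariance hB hD,
    cov_eq_covariance hB' hD]
  ext i j
  simp [covariance_add_left (hB i) (hB' i) (hD j)]

lemma cov_sub_right (hD : ∀ j, MemLp (D j) 2 μ) (hB : ∀ i, MemLp (B i) 2 μ)
    (hB' : ∀ i, MemLp (B' i) 2 μ) : cov μ D (B - B') = cov μ D B - cov μ D B' := by
  rw [← cov_transpose, cov_sub_left hB hB' hD, Matrix.transpose_sub, cov_transpose,
    cov_transpose]

lemma cov_linComb_left (A : Matrix (Fin p) (Fin m) ℝ) (hB : ∀ i, MemLp (B i) 2 μ)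
    (hD : ∀ j, MemLp (D j) 2 μ) : cov μ (linComb A B) D = A * cov μ B D := by
  rw [cov_eq_covariance (memLp_linComb A hB) hD, cov_eq_covariance hB hD]
  ext k j
  simp only [linComb, Matrix.of_apply, Matrix.mul_apply,
    covariance_sum_left (fun i => (hB i).const_smul (A k i)) (hD j), covariance_smul_left]

lemma cov_linComb_right (A : Matrix (Fin p) (Fin m) ℝ) (hB : ∀ i, MemLp (B i) 2 μ)
    (hD : ∀ j, MemLp (D j) 2 μ) : cov μ D (linComb A B) = cov μ D B * Aᵀ := by
  rw [← cov_transpose, cov_linComb_left A hB hD, Matrix.transpose_mul, cov_transpose]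

lemma cov_sub_const (hB : ∀ i, MemLp (B i) 2 μ) (hD : ∀ j, MemLp (D j) 2 μ)
    (b : Fin m → ℝ) (d : Fin n → ℝ) :
    cov μ (fun i ω => B i ω - b i) (fun j ω => D j ω - d j) = cov μ B D := by
  rw [cov_eq_covariance (B := fun i ω => B i ω - b i) (D := fun j ω => D j ω - d j)
    (fun i => (hB i).sub (memLp_const (b i))) (fun j => (hD j).sub (memLp_const (d j))),
    cov_eq_covariance hB hD]
  ext i j
  simp [covariance_sub_const_left ((hB i).integrable one_le_two),
    covariance_sub_const_right ((hD j).integrable one_le_two)]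

variable {C : Fin p → Ω → ℝ}

lemma mul_cov_eq_zero_of_mul_cov_self_eq_zero (A : Matrix (Fin p) (Fin n) ℝ)
    (hD : ∀ j, MemLp (D j) 2 μ) (hB : ∀ i, MemLp (B i) 2 μ) (h : A * cov μ D D = 0) :
    A * cov μ D B = 0 := by
  have hAD := memLp_linComb A hD
  have hvar : ∀ k, Var[linComb A D k; μ] = 0 := fun k => by
    have hself : cov μ (linComb A D) (linComb A D) = 0 := by
      rw [cov_linComb_left A hD hAD, cov_linComb_right A hD hD, ← Matrix.mul_assoc, h,
        Matrix.zero_mul]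
    rw [← covariance_self (hAD k).aemeasurable]
    simpa [cov_eq_covariance hAD hAD] using congrFun (congrFun hself k) k
  rw [← cov_linComb_left A hD hB, cov_eq_covariance hAD hB]
  ext k i
  exact covariance_eq_zero_of_variance_eq_zero (hAD k) (hvar k) (B i)

lemma cov_self_mul_mul_cov {W : Matrix (Fin n) (Fin n) ℝ}
    (hD : ∀ j, MemLp (D j) 2 μ) (hB : ∀ i, MemLp (B i) 2 μ)
    (hW : cov μ D D * W * cov μ D D = cov μ D D) :
    cov μ D D * W * cov μ D B = cov μ D B := by
  have h := mul_cov_eq_zero_of_mul_cov_self_eq_zero (1 - cov μ D D * W) hD hB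
    (by rw [Matrix.sub_mul, Matrix.one_mul, hW, sub_self])
  rwa [Matrix.sub_mul, Matrix.one_mul, sub_eq_zero, eq_comm] at h

lemma adjCov_eq_cov (hB : ∀ i, MemLp (B i) 2 μ) (hC : ∀ i, MemLp (C i) 2 μ)
    (hD : ∀ j, MemLp (D j) 2 μ) (W : Matrix (Fin n) (Fin n) ℝ) :
    adjCov μ B C D W =
      cov μ (B - linComb (cov μ B D * W) D) (C - linComb (cov μ C D * W) D) := by
  have shift : ∀ {m} (B : Fin m → Ω → ℝ), (fun i ω => B i ω - adjExp μ B D W i ω) =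
      fun i ω => (B - linComb (cov μ B D * W) D) i ω -
        ((∫ ω', B i ω' ∂μ) - ∑ j, (cov μ B D * W) i j * ∫ ω', D j ω' ∂μ) := by
    intro m B
    funext i ω
    simp only [adjExp, mul_sub, Finset.sum_sub_distrib, Pi.sub_apply, linComb, Finset.sum_apply,
      Pi.smul_apply, smul_eq_mul]
    ring
  rw [adjCov, shift B, shift C]
  exact cov_sub_const (fun i => (hB i).sub (memLp_linComb _ hD i))
    (fun i => (hC i).sub (memLp_linComb _ hD i)) _ _

lemma adjCov_eq_zero_of_cov_eq_mul (G : Matrix (Fin m) (Fin n) ℝ) {W : Matrix (Fin n) (Fin n) ℝ}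
    (hB : ∀ i, MemLp (B i) 2 μ) (hC : ∀ i, MemLp (C i) 2 μ) (hD : ∀ j, MemLp (D j) 2 μ)
    (hW : cov μ D D * W * cov μ D D = cov μ D D)
    (hBD : cov μ B D = G * cov μ D D) (hBC : cov μ B C = G * cov μ D C) :
    adjCov μ B C D W = 0 := by
  set P := cov μ B D * W
  have hR : ∀ i, MemLp ((B - linComb P D) i) 2 μ := fun i => (hB i).sub (memLp_linComb P hD i)
  have hRD : cov μ (B - linComb P D) D = 0 := by
    rw [cov_sub_left hB (memLp_linComb P hD) hD, cov_linComb_left P hD hD, hBD]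
    simp only [P, hBD, Matrix.mul_assoc, hW, sub_self]
  have hRC : cov μ (B - linComb P D) C = 0 := by
    rw [cov_sub_left hB (memLp_linComb P hD) hC, cov_linComb_left P hD hC, hBC]
    simp only [P, hBD, Matrix.mul_assoc, cov_self_mul_mul_cov hD hC hW, sub_self]
  rw [adjCov_eq_cov hB hC hD, cov_sub_right hR hC (memLp_linComb _ hD),
    cov_linComb_right _ hD hR, hRC, hRD, Matrix.zero_mul, sub_zero]

end

/-- dynamic linear model structure: if `Y_i = Σ_j G_{ij}·X_j + ω_i` with
`Cov(ω,X) = 0` and `Cov(ω,Z) = 0`, then `Cov_X(Y,Z) = 0`, i.e. `Y` and `Z` are adjusted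
orthogonal given `X` (with `W_X` the Moore–Penrose inverse of `Var(X)`). -/
theorem dlm_adjOrth [MeasurableSpace Ω] (μ : Measure Ω) [IsProbabilityMeasure μ]
    {mx my mz : ℕ} (X : Fin mx → Ω → ℝ) (Z : Fin mz → Ω → ℝ) (eps : Fin my → Ω → ℝ)
    (G : Matrix (Fin my) (Fin mx) ℝ)
    (hX : ∀ i, Measurable (X i) ∧ MemLp (X i) 2 μ)
    (hZ : ∀ i, Measurable (Z i) ∧ MemLp (Z i) 2 μ)
    (heps : ∀ i, Measurable (eps i) ∧ MemLp (eps i) 2 μ)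
    (Y : Fin my → Ω → ℝ) (hY : ∀ i ω, Y i ω = (∑ j, G i j * X j ω) + eps i ω)
    (hepsX : cov μ eps X = 0) (hepsZ : cov μ eps Z = 0)
    (WX : Matrix (Fin mx) (Fin mx) ℝ) (hWX : IsMoorePenrose (cov μ X X) WX) :
    adjCov μ Y Z X WX = 0 := by
  have hX2 i := (hX i).2
  have hZ2 i := (hZ i).2
  have heps2 i := (heps i).2
  obtain rfl : Y = linComb G X + eps := by
    funext i ω
    simp [hY, linComb, Finset.sum_apply]
  have hcovY {n} (D : Fin n → Ω → ℝ) (hD : ∀ j, MemLp (D j) 2 μ) (hepsD : cov μ eps D = 0) :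
      cov μ (linComb G X + eps) D = G * cov μ X D := by
    rw [cov_add_left (memLp_linComb G hX2) heps2 hD, cov_linComb_left G hX2 hD, hepsD, add_zero]
  exact adjCov_eq_zero_of_cov_eq_mul G (fun i => (memLp_linComb G hX2 i).add (heps2 i)) hZ2 hX2
    hWX.1 (hcovY X hX2 hepsX) (hcovY Z hZ2 hepsZ)
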